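/- (Model 2e3a4h) Define vector fields on ℝ⁴ (coordinates (x,y,u,v)) by e₁ = ∂x + y∂u + 2x∂v, e₂ = −3y∂x + ∂y + x∂u − 6u∂v, e₃ = 2x∂x + y∂y + 3u∂u + 4v∂v, and let S = {(x, y, xy + y³, x² − (3/2)y⁴) : (x,y) ∈ ℝ²}. Then: (i) each of e₁, e₂, e₃ is tangent to S; (ii) at every point of S the first two components of e₁ and e₂, namely (1, 0) and (−3y, 1), are linearly independent, so S is affinely homogeneous; (iii) with bracket [X,Y](p) = (DY)(p)(X(p)) − (DX)(p)(Y(p)) one has [e₁,e₂] = 0, [e₁,e₃] = 2·e₁, [e₂,e₃] = e₂. -/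

import Mathlib

namespace Model2e3a4h

/-- Lie bracket of vector fields on `ℝ⁴`, `[X,Y](p) = DY(p)(X(p)) − DX(p)(Y(p))`. -/
noncomputable def lieBracket (X Y : (Fin 4 → ℝ) → Fin 4 → ℝ) :
    (Fin 4 → ℝ) → Fin 4 → ℝ :=
  fun p => fderiv ℝ Y p (X p) - fderiv ℝ X p (Y p)

/-- Tangency of a vector field `X` on `ℝ⁴ ∋ (x,y,u,v)` to the graph
`S = {(x, y, F(x,y), G(x,y))}`. -/
def TangentToGraph (F G : ℝ × ℝ → ℝ) (X : (Fin 4 → ℝ) → Fin 4 → ℝ) : Prop :=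
  ∀ p : ℝ × ℝ,
    X ![p.1, p.2, F p, G p] 2
        = fderiv ℝ F p (1, 0) * X ![p.1, p.2, F p, G p] 0
          + fderiv ℝ F p (0, 1) * X ![p.1, p.2, F p, G p] 1 ∧
    X ![p.1, p.2, F p, G p] 3
        = fderiv ℝ G p (1, 0) * X ![p.1, p.2, F p, G p] 0
          + fderiv ℝ G p (0, 1) * X ![p.1, p.2, F p, G p] 1

/-- `u = xy + y³`. -/
noncomputable def F : ℝ × ℝ → ℝ := fun p => p.1 * p.2 + p.2 ^ 3
/-- `v = x² − (3/2)y⁴`. -/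
noncomputable def G : ℝ × ℝ → ℝ := fun p => p.1 ^ 2 - (3 / 2) * p.2 ^ 4

/-- `e₁ = ∂x + y∂u + 2x∂v`. -/
noncomputable def e₁ : (Fin 4 → ℝ) → Fin 4 → ℝ := fun p => ![1, 0, p 1, 2 * p 0]
/-- `e₂ = −3y∂x + ∂y + x∂u − 6u∂v`. -/
noncomputable def e₂ : (Fin 4 → ℝ) → Fin 4 → ℝ := fun p => ![-3 * p 1, 1, p 0, -6 * p 2]
/-- `e₃ = 2x∂x + y∂y + 3u∂u + 4v∂v`. -/
noncomputable def e₃ : (Fin 4 → ℝ) → Fin 4 → ℝ :=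
  fun p => ![2 * p 0, p 1, 3 * p 2, 4 * p 3]

/-!
The three fields are affine, `p ↦ A p + b`, so their derivatives are the constant matrices `A`
and the commutation relations become polynomial identities.
Tangency is checked against the partial derivatives `u_x = y`, `u_y = x + 3y²`, `v_x = 2x`,
`v_y = -6y³` of the graph.
-/

open Matrix

theorem fderiv_apply_one_zero {f : ℝ × ℝ → ℝ} {p : ℝ × ℝ} (hf : DifferentiableAt ℝ f p) :
    fderiv ℝ f p (1, 0) = deriv (fun x => f (x, p.2)) p.1 :=
  (hf.hasFDerivAt.comp_hasDerivAt p.1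
    ((hasDerivAt_id p.1).prodMk (hasDerivAt_const p.1 p.2))).deriv.symm

theorem fderiv_apply_zero_one {f : ℝ × ℝ → ℝ} {p : ℝ × ℝ} (hf : DifferentiableAt ℝ f p) :
    fderiv ℝ f p (0, 1) = deriv (fun y => f (p.1, y)) p.2 :=
  (hf.hasFDerivAt.comp_hasDerivAt p.2
    ((hasDerivAt_const p.2 p.1).prodMk (hasDerivAt_id p.2))).deriv.symm

theorem fderiv_F_apply_one_zero (p : ℝ × ℝ) : fderiv ℝ F p (1, 0) = p.2 := by
  rw [fderiv_apply_one_zero (by unfold F; fun_prop)]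
  simp [F]

theorem fderiv_F_apply_zero_one (p : ℝ × ℝ) : fderiv ℝ F p (0, 1) = p.1 + 3 * p.2 ^ 2 := by
  rw [fderiv_apply_zero_one (by unfold F; fun_prop)]
  simp only [F]
  rw [deriv_fun_add (by fun_prop) (by fun_prop)]
  simp

theorem fderiv_G_apply_one_zero (p : ℝ × ℝ) : fderiv ℝ G p (1, 0) = 2 * p.1 := by
  rw [fderiv_apply_one_zero (by unfold G; fun_prop)]
  simp [G]

theorem fderiv_G_apply_zero_one (p : ℝ × ℝ) : fderiv ℝ G p (0, 1) = -6 * p.2 ^ 3 := by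
  rw [fderiv_apply_zero_one (by unfold G; fun_prop)]
  simp [G]
  ring

theorem tangentToGraph_F_G_iff (X : (Fin 4 → ℝ) → Fin 4 → ℝ) :
    TangentToGraph F G X ↔ ∀ x y : ℝ,
      X ![x, y, x * y + y ^ 3, x ^ 2 - 3 / 2 * y ^ 4] 2 =
          y * X ![x, y, x * y + y ^ 3, x ^ 2 - 3 / 2 * y ^ 4] 0
            + (x + 3 * y ^ 2) * X ![x, y, x * y + y ^ 3, x ^ 2 - 3 / 2 * y ^ 4] 1 ∧
      X ![x, y, x * y + y ^ 3, x ^ 2 - 3 / 2 * y ^ 4] 3 =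
          2 * x * X ![x, y, x * y + y ^ 3, x ^ 2 - 3 / 2 * y ^ 4] 0
            - 6 * y ^ 3 * X ![x, y, x * y + y ^ 3, x ^ 2 - 3 / 2 * y ^ 4] 1 := by
  simp only [TangentToGraph, Prod.forall, fderiv_F_apply_one_zero, fderiv_F_apply_zero_one,
    fderiv_G_apply_one_zero, fderiv_G_apply_zero_one, neg_mul, F, G, ← sub_eq_add_neg]

theorem lieBracket_mulVec_add (A B : Matrix (Fin 4) (Fin 4) ℝ) (b c : Fin 4 → ℝ) :
    lieBracket (fun p => A *ᵥ p + b) (fun p => B *ᵥ p + c) =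
      fun p => B *ᵥ (A *ᵥ p + b) - A *ᵥ (B *ᵥ p + c) := by
  have hasFDerivAt_affine (M : Matrix (Fin 4) (Fin 4) ℝ) (d p : Fin 4 → ℝ) :
      HasFDerivAt (fun q => M *ᵥ q + d) (LinearMap.toContinuousLinearMap (toLin' M)) p :=
    (LinearMap.toContinuousLinearMap (toLin' M)).hasFDerivAt.add_const d
  funext p
  simp [lieBracket, (hasFDerivAt_affine A b p).fderiv, (hasFDerivAt_affine B c p).fderiv]

theorem e₁_eq_mulVec_add :
    e₁ = fun p => !![0, 0, 0, 0; 0, 0, 0, 0; 0, 1, 0, 0; 2, 0, 0, 0] *ᵥ p + ![1, 0, 0, 0] := by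
  funext p; ext i; fin_cases i <;> simp [e₁, dotProduct, Fin.sum_univ_four]

theorem e₂_eq_mulVec_add :
    e₂ = fun p => !![0, -3, 0, 0; 0, 0, 0, 0; 1, 0, 0, 0; 0, 0, -6, 0] *ᵥ p + ![0, 1, 0, 0] := by
  funext p; ext i; fin_cases i <;> simp [e₂, dotProduct, Fin.sum_univ_four]

theorem e₃_eq_mulVec_add :
    e₃ = fun p => !![2, 0, 0, 0; 0, 1, 0, 0; 0, 0, 3, 0; 0, 0, 0, 4] *ᵥ p + 0 := by
  funext p; ext i; fin_cases i <;> simp [e₃, dotProduct, Fin.sum_univ_four]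

theorem linearIndependent_one_zero_and_one (a : ℝ) :
    LinearIndependent ℝ ![((1 : ℝ), (0 : ℝ)), (a, 1)] := by
  refine LinearIndependent.pair_iff.mpr fun s t h => ?_
  simp only [Prod.smul_mk, smul_eq_mul, Prod.mk_add_mk, Prod.mk_eq_zero] at h
  have ht : t = 0 := by simpa using h.2
  subst ht
  simpa using h.1

theorem tangentToGraph_e₁ : TangentToGraph F G e₁ := by
  rw [tangentToGraph_F_G_iff]
  intro x y
  simp [e₁]

theorem tangentToGraph_e₂ : TangentToGraph F G e₂ := by
  rw [tangentToGraph_F_G_iff]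
  intro x y
  simp [e₂]
  constructor <;> ring

theorem tangentToGraph_e₃ : TangentToGraph F G e₃ := by
  rw [tangentToGraph_F_G_iff]
  intro x y
  simp [e₃]
  constructor <;> ring

theorem lieBracket_e₁_e₂ : lieBracket e₁ e₂ = 0 := by
  rw [e₁_eq_mulVec_add, e₂_eq_mulVec_add, lieBracket_mulVec_add]
  funext p; ext i; fin_cases i <;> simp [dotProduct, Fin.sum_univ_four]; ring

theorem lieBracket_e₁_e₃ : lieBracket e₁ e₃ = (2 : ℝ) • e₁ := by
  rw [e₁_eq_mulVec_add, e₃_eq_mulVec_add, lieBracket_mulVec_add]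
  funext p; ext i; fin_cases i <;> simp [dotProduct, Fin.sum_univ_four] <;> ring

theorem lieBracket_e₂_e₃ : lieBracket e₂ e₃ = e₂ := by
  rw [e₂_eq_mulVec_add, e₃_eq_mulVec_add, lieBracket_mulVec_add]
  funext p; ext i; fin_cases i <;> simp [dotProduct, Fin.sum_univ_four] <;> ring

/-- **Model 2e3a4h:** the surface `{u = xy + y³, v = x² − (3/2)y⁴}` is affinely
homogeneous, with tangent vector fields `e₁, e₂, e₃` satisfying
`[e₁,e₂] = 0`, `[e₁,e₃] = 2e₁`, `[e₂,e₃] = e₂`. -/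
theorem model_2e3a4h :
    (TangentToGraph F G e₁ ∧ TangentToGraph F G e₂ ∧ TangentToGraph F G e₃) ∧
    (∀ p : ℝ × ℝ,
      e₁ ![p.1, p.2, F p, G p] 0 = 1 ∧ e₁ ![p.1, p.2, F p, G p] 1 = 0 ∧
      e₂ ![p.1, p.2, F p, G p] 0 = -3 * p.2 ∧ e₂ ![p.1, p.2, F p, G p] 1 = 1 ∧
      LinearIndependent ℝ
        ![((e₁ ![p.1, p.2, F p, G p] 0, e₁ ![p.1, p.2, F p, G p] 1) : ℝ × ℝ),
          ((e₂ ![p.1, p.2, F p, G p] 0, e₂ ![p.1, p.2, F p, G p] 1) : ℝ × ℝ)]) ∧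
    (lieBracket e₁ e₂ = 0 ∧ lieBracket e₁ e₃ = (2 : ℝ) • e₁ ∧
      lieBracket e₂ e₃ = e₂) :=
  ⟨⟨tangentToGraph_e₁, tangentToGraph_e₂, tangentToGraph_e₃⟩,
    fun _ => ⟨rfl, rfl, rfl, rfl, linearIndependent_one_zero_and_one _⟩,
    lieBracket_e₁_e₂, lieBracket_e₁_e₃, lieBracket_e₂_e₃⟩

end Model2e3a4h
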